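/- Let H be a graded connected Hopf algebra over ℂ, φ ∈ G_A a local character, and m, n ∈ ℤ with −n+2m ≥ 0. Suppose g_±(s) are pointwise differentiable curves in G_A with g_±(0) = ε furnishing the Birkhoff factorization exp(−2sλ^{−n+2m}·tildeβ_φ) = g_-(s)^{-1}⋆g_+(s). Then the Lax pair flow L(s) = Ad(g_+(s))(tildeβ_φ) is constant: L(s) = tildeβ_φ for all s; in particular the beta character tildeβ_φ, and hence the β-function, is a fixed point of this Lax pair flow. -/

import Mathlib

open scoped TensorProduct

set_option synthInstance.maxHeartbeats 1000000
set_option maxHeartbeats 1600000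
set_option linter.unnecessarySeqFocus false

noncomputable section

/-- The algebra `A = ℂ((λ))` of formal Laurent series with finite pole part. -/
abbrev LS := LaurentSeries ℂ

/-- `ℂ`-scalars commute with multiplication of Laurent series. -/
instance : SMulCommClass ℂ LS LS := by
  constructor
  intro c a b
  show c • (a * b) = a * (c • b)
  rw [← HahnSeries.single_zero_mul_eq_smul, ← HahnSeries.single_zero_mul_eq_smul]
  ring

/-- Scalar tower for `ℂ`-scalars and Laurent series. -/
instance : IsScalarTower ℂ LS LS := by
  constructor
  intro c a b
  show (c • a) * b = c • (a * b)
  rw [← HahnSeries.single_zero_mul_eq_smul, ← HahnSeries.single_zero_mul_eq_smul]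
  ring

/-- `A₊ = ℂ[[λ]]`: the holomorphic part. -/
def Aplus (f : LS) : Prop := ∀ n : ℤ, n < 0 → f.coeff n = 0

/-- `A₋ = λ⁻¹ℂ[λ⁻¹]`: the polar part. -/
def Aminus (f : LS) : Prop := ∀ n : ℤ, 0 ≤ n → f.coeff n = 0

/-- The formal variable `λ`. -/
def lam : LS := HahnSeries.single (1 : ℤ) (1 : ℂ)

/-- `λ^k` for `k : ℤ`. -/
def lamZ (k : ℤ) : LS := HahnSeries.single k (1 : ℂ)

/-- `e^{cλ} = Σ_k c^k λ^k / k!` as a Laurent series. -/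
def expL (c : ℂ) : LS :=
  HahnSeries.ofPowerSeries ℤ ℂ (PowerSeries.mk fun k => c ^ k / (k.factorial : ℂ))

section Hopf

variable {H : Type} [Ring H] [HopfAlgebra ℂ H]

/-- Convolution product of linear maps from a Hopf algebra to `A`. -/
def conv (f g : H →ₗ[ℂ] LS) : H →ₗ[ℂ] LS :=
  LinearMap.mul' ℂ LS ∘ₗ TensorProduct.map f g ∘ₗ Coalgebra.comul

/-- The unit `ε` of the convolution algebra. -/
def epsA : H →ₗ[ℂ] LS := LinearMap.toSpanSingleton ℂ LS 1 ∘ₗ Coalgebra.counit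

/-- Characters: algebra morphisms `H → A` sending `1` to `1`. -/
def IsCharacter (φ : H →ₗ[ℂ] LS) : Prop :=
  φ 1 = 1 ∧ ∀ x y : H, φ (x * y) = φ x * φ y

/-- The group inverse of a character: `φ⁻¹ = φ ∘ S`. -/
def charInv (φ : H →ₗ[ℂ] LS) : H →ₗ[ℂ] LS := φ ∘ₗ HopfAlgebra.antipode (R := ℂ)

/-- Infinitesimal characters: `Z(xy) = Z(x)ε(y) + ε(x)Z(y)`. -/
def IsInfChar (Z : H →ₗ[ℂ] LS) : Prop :=
  ∀ x y : H, Z (x * y) = Z x * epsA y + epsA x * Z y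

/-- The Lie bracket `[Z,Z'] = Z⋆Z' − Z'⋆Z` on infinitesimal characters. -/
def lieBr (Z W : H →ₗ[ℂ] LS) : H →ₗ[ℂ] LS := conv Z W - conv W Z

/-- The adjoint action `Ad(g)L = g⋆L⋆g⁻¹`. -/
def Adc (g L : H →ₗ[ℂ] LS) : H →ₗ[ℂ] LS := conv g (conv L (charInv g))

/-- Convolution powers `Z^{⋆k}`. -/
def convPow (Z : H →ₗ[ℂ] LS) : ℕ → (H →ₗ[ℂ] LS)
  | 0 => epsA
  | k + 1 => conv Z (convPow Z k)

/-- `E = exp(Z)`, the convolution exponential: for each `x ∈ H` the series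
`Σ_k Z^{⋆k}(x)/k!` stabilizes (a finite sum by connectedness) with value `E(x)`. -/
def IsConvExp (Z E : H →ₗ[ℂ] LS) : Prop :=
  ∀ x : H, ∃ N : ℕ, ∀ M : ℕ, N ≤ M →
    E x = ∑ k ∈ Finset.range M, ((k.factorial : ℂ))⁻¹ • convPow Z k x

/- ℂ-valued (scalar) versions, for `β`-functions. -/

/-- Convolution product of ℂ-valued linear maps on a Hopf algebra. -/
def convC (f g : H →ₗ[ℂ] ℂ) : H →ₗ[ℂ] ℂ :=
  LinearMap.mul' ℂ ℂ ∘ₗ TensorProduct.map f g ∘ₗ Coalgebra.comul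

/-- ℂ-valued characters. -/
def IsCharacterC (φ : H →ₗ[ℂ] ℂ) : Prop :=
  φ 1 = 1 ∧ ∀ x y : H, φ (x * y) = φ x * φ y

/-- The group inverse of a ℂ-valued character. -/
def charInvC (φ : H →ₗ[ℂ] ℂ) : H →ₗ[ℂ] ℂ := φ ∘ₗ HopfAlgebra.antipode (R := ℂ)

/-- ℂ-valued infinitesimal characters. -/
def IsInfCharC (Z : H →ₗ[ℂ] ℂ) : Prop :=
  ∀ x y : H, Z (x * y) = Z x * Coalgebra.counit y + Coalgebra.counit x * Z y

end Hopf

section Graded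

variable {H : Type} [Ring H] [HopfAlgebra ℂ H]
variable (𝒜 : ℕ → Submodule ℂ H) [GradedAlgebra 𝒜]

/-- Connectedness: `H₀ = ℂ·1`. -/
def IsConnectedGrading : Prop := 𝒜 0 = Submodule.span ℂ {(1 : H)}

/-- The coproduct is grading-preserving: `Δ(H_n) ⊆ Σ_{i+j=n} H_i ⊗ H_j`. -/
def ComulGraded : Prop :=
  ∀ n : ℕ, ∀ x ∈ 𝒜 n, Coalgebra.comul (R := ℂ) x ∈
    ⨆ p : {p : ℕ × ℕ // p.1 + p.2 = n},
      LinearMap.range (TensorProduct.map ((𝒜 p.1.1).subtype) ((𝒜 p.1.2).subtype))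

/-- The counit is grading-preserving: it vanishes in positive degrees. -/
def CounitGraded : Prop := ∀ n : ℕ, 0 < n → ∀ x ∈ 𝒜 n, Coalgebra.counit (R := ℂ) x = 0

/-- The antipode is grading-preserving. -/
def AntipodeGraded : Prop := ∀ n : ℕ, ∀ x ∈ 𝒜 n, HopfAlgebra.antipode (R := ℂ) x ∈ 𝒜 n

/-- The grading biderivation `Y(x) = n·x` for `x ∈ H_n`. -/
def Ymap : H →ₗ[ℂ] H :=
  (DFinsupp.lsum ℕ fun n : ℕ => ((n : ℂ) • (𝒜 n).subtype)) ∘ₗ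
    (DirectSum.decomposeLinearEquiv 𝒜).toLinearMap

/-- `φ^t`, defined by `φ^t(x) = e^{tλn}·φ(x)` for homogeneous `x` of degree `n`. -/
def charScale (t : ℂ) (φ : H →ₗ[ℂ] LS) : H →ₗ[ℂ] LS :=
  (DFinsupp.lsum ℕ fun n : ℕ => (expL (t * (n : ℂ)) • (φ ∘ₗ (𝒜 n).subtype))) ∘ₗ
    (DirectSum.decomposeLinearEquiv 𝒜).toLinearMap

/-- `R̃(φ) = φ^{-1} ⋆ (φ ∘ Y)`. -/
def Rtilde (φ : H →ₗ[ℂ] LS) : H →ₗ[ℂ] LS := conv (charInv φ) (φ ∘ₗ Ymap 𝒜)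

/-- `(φm, φp)` is the Birkhoff decomposition of `φ`: `φ = φm^{-1} ⋆ φp`, i.e. `φm ⋆ φ = φp`,
with `φp` holomorphic and `φm − ε` a pure pole part. -/
def IsBirkhoff (φ φm φp : H →ₗ[ℂ] LS) : Prop :=
  IsCharacter φm ∧ IsCharacter φp ∧ (∀ x, Aplus (φp x)) ∧
    (∀ x, Aminus (φm x - epsA x)) ∧ conv φm φ = φp

/-- A character is local if the negative Birkhoff part of `φ^t` is independent of `t`. -/
def IsLocal (φ : H →ₗ[ℂ] LS) : Prop :=
  IsCharacter φ ∧ ∃ φm : H →ₗ[ℂ] LS, ∀ t : ℂ, ∃ φp, IsBirkhoff (charScale 𝒜 t φ) φm φp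

/-- `B = tildeβ_φ`:  `B(x) = (d/dt)|_{t=0} (φ^{-1} ⋆ φ^t)(x)`, coefficientwise. -/
def HasTildeBeta (φ B : H →ₗ[ℂ] LS) : Prop :=
  ∀ (x : H) (n : ℤ),
    HasDerivAt (fun t : ℂ => ((conv (charInv φ) (charScale 𝒜 t φ)) x).coeff n)
      ((B x).coeff n) 0

/-- The `β`-function `β_φ = −(Res φ₋) ∘ Y` of a local character whose negative
Birkhoff part is `φm`. -/
def betaFn (φm : H →ₗ[ℂ] LS) : H → ℂ := fun x => -((φm (Ymap 𝒜 x)).coeff (-1))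

end Graded

section Curves

variable {H : Type} [Ring H] [HopfAlgebra ℂ H]

/-- Pointwise (coefficientwise) derivative of a curve of maps `H → A`. -/
def HasDerivAtF (F : ℝ → (H →ₗ[ℂ] LS)) (F' : H →ₗ[ℂ] LS) (t : ℝ) : Prop :=
  ∀ (x : H) (n : ℤ), HasDerivAt (fun s : ℝ => ((F s) x).coeff n) ((F' x).coeff n) t

/-- Pointwise differentiability of a curve of maps `H → A`. -/
def PointwiseDifferentiable (F : ℝ → (H →ₗ[ℂ] LS)) : Prop :=
  ∀ (x : H) (n : ℤ), Differentiable ℝ (fun s : ℝ => ((F s) x).coeff n)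

end Curves

/-- The operator `R = P₊ − P₋` on Laurent series. -/
def Rop : LS →ₗ[ℂ] LS where
  toFun f :=
    { coeff := fun n => if n < 0 then -f.coeff n else f.coeff n
      isPWO_support' := f.isPWO_support'.mono (by
        intro n hn
        simp only [Function.mem_support] at hn ⊢
        by_cases h : n < 0 <;> simp_all) }
  map_add' f g := by
    ext n
    by_cases h : n < 0 <;> simp [h] <;> ring
  map_smul' c f := by
    ext n
    by_cases h : n < 0 <;> simp [h]

/-!
Locality gives `φ⁻¹ ⋆ φ^t = (φ₊(0))⁻¹ ⋆ φ₊(t)` for every `t`, which is holomorphic, so its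
`t`-derivative `tildeβ_φ` is holomorphic; since `−n + 2m ≥ 0`, so is
`exp(−2sλ^{−n+2m}·tildeβ_φ) = g₋(s)⁻¹ ⋆ g₊(s)`. Then `g₋(s)⁻¹ = exp(…) ⋆ g₊(s)⁻¹` is both
holomorphic and `ε` plus a pole part, hence equals `ε`, and `g₊(s)` is the exponential itself.
An exponential of a multiple of `tildeβ_φ` commutes with `tildeβ_φ`, so `Ad(g₊(s))` fixes it.
-/

open WithConv Filter

section ConvolutionAlgebra

variable {R A C : Type*} [CommSemiring R] [Semiring A] [Algebra R A]
  [AddCommMonoid C] [Module R C] [Coalgebra R C]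

def Subalgebra.convMapsInto (S : Subalgebra R A) : Subalgebra R (WithConv (C →ₗ[R] A)) where
  carrier := {f | ∀ c, f c ∈ S}
  mul_mem' {f g} hf hg c := by
    rw [(Coalgebra.Repr.arbitrary R c).convMul_apply]
    exact S.sum_mem fun i _ => S.mul_mem (hf _) (hg _)
  add_mem' hf hg c := S.add_mem (hf c) (hg c)
  algebraMap_mem' r c := S.smul_mem (S.algebraMap_mem _) r

lemma eventually_convMul_apply_eq {ι : Type*} {l : Filter ι} {E : WithConv (C →ₗ[R] A)}
    {F : ι → WithConv (C →ₗ[R] A)} (h : ∀ c, ∀ᶠ i in l, E c = F i c)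
    (f : WithConv (C →ₗ[R] A)) (c : C) :
    ∀ᶠ i in l, (f * E) c = (f * F i) c ∧ (E * f) c = (F i * f) c := by
  let 𝓡 := Coalgebra.Repr.arbitrary R c
  have hl : ∀ᶠ i in l, ∀ j ∈ 𝓡.index, E (𝓡.left j) = F i (𝓡.left j) :=
    (eventually_all_finset _).2 fun j _ => h _
  have hr : ∀ᶠ i in l, ∀ j ∈ 𝓡.index, E (𝓡.right j) = F i (𝓡.right j) :=
    (eventually_all_finset _).2 fun j _ => h _
  filter_upwards [hl, hr] with i hil hir
  simp only [𝓡.convMul_apply]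
  exact ⟨Finset.sum_congr rfl fun j hj => by rw [hir j hj],
    Finset.sum_congr rfl fun j hj => by rw [hil j hj]⟩

end ConvolutionAlgebra

-- Mathlib's default `Algebra ℂ LS` goes through `PowerSeries ℂ`, whose scalar action is not
-- definitionally the coefficientwise one carried by `H →ₗ[ℂ] LS`.
attribute [local instance high] HahnSeries.instAlgebra

-- The module structure is spelled `Algebra.toModule`, definitionally the coefficientwise one of
-- `H →ₗ[ℂ] LS`, so that Mathlib's convolution algebra instances on `WithConv` apply.
abbrev ConvAlg (H : Type) [Ring H] [HopfAlgebra ℂ H] : Type :=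
  WithConv (@LinearMap ℂ ℂ _ _ (RingHom.id ℂ) H LS _ _ _ Algebra.toModule)

abbrev ConvAlg.of {H : Type} [Ring H] [HopfAlgebra ℂ H] (f : H →ₗ[ℂ] LS) : ConvAlg H := toConv f

def aplusSubalgebra : Subalgebra ℂ LS where
  carrier := {f | Aplus f}
  mul_mem' {a b} ha hb n hn := by
    by_contra hc
    obtain ⟨i, hi, j, hj, hij⟩ := HahnSeries.support_mul_subset (Function.mem_support.2 hc)
    have hi0 : 0 ≤ i := le_of_not_gt fun h => hi (ha i h)
    have hj0 : 0 ≤ j := le_of_not_gt fun h => hj (hb j h)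
    simp only at hij
    omega
  add_mem' ha hb n hn := by rw [HahnSeries.coeff_add, ha n hn, hb n hn, add_zero]
  algebraMap_mem' c n hn := by
    simp [HahnSeries.algebraMap_apply, hn.ne]

lemma aplus_lamZ {k : ℤ} (hk : 0 ≤ k) : Aplus (lamZ k) := fun n hn => by
  rw [lamZ, HahnSeries.coeff_single, if_neg (by omega)]

lemma eq_of_aplus_of_aminus_sub {a b : LS} (ha : Aplus a) (hb : Aplus b) (h : Aminus (a - b)) :
    a = b := by
  ext n
  rcases lt_or_ge n 0 with hn | hn
  · rw [ha n hn, hb n hn]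
  · exact sub_eq_zero.mp (h n hn)

section Scaling

variable {H : Type} [Ring H] [HopfAlgebra ℂ H]

lemma expL_zero : expL 0 = 1 := by
  rw [expL, ← map_one (HahnSeries.ofPowerSeries ℤ ℂ)]
  congr 1
  ext (_ | k) <;> simp

lemma charScale_zero (𝒜 : ℕ → Submodule ℂ H) [GradedAlgebra 𝒜] (φ : H →ₗ[ℂ] LS) :
    charScale 𝒜 0 φ = φ := by
  classical
  ext1 x
  simp only [charScale, zero_mul, expL_zero, one_smul, LinearMap.comp_apply,
    DFinsupp.lsum_apply_apply, DFinsupp.sumAddHom_apply]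
  conv_rhs => rw [← DirectSum.sum_support_decompose 𝒜 x, map_sum]
  rfl

end Scaling

section Characters

variable {H : Type} [Ring H] [HopfAlgebra ℂ H]

lemma ConvAlg.of_conv (f g : H →ₗ[ℂ] LS) :
    ConvAlg.of (conv f g) = ConvAlg.of f * ConvAlg.of g := rfl

lemma ConvAlg.of_smul (c : ℂ) (f : H →ₗ[ℂ] LS) : ConvAlg.of (c • f) = c • ConvAlg.of f := rfl

lemma ConvAlg.of_smul_laurent (a : LS) (f : H →ₗ[ℂ] LS) :
    ConvAlg.of (a • f) = a • ConvAlg.of f := rfl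

lemma ConvAlg.commute_smul_smul (c : ℂ) (a : LS) (f : H →ₗ[ℂ] LS) :
    Commute (ConvAlg.of f) (ConvAlg.of (c • a • f)) := by
  rw [ConvAlg.of_smul, ConvAlg.of_smul_laurent]
  exact ((Commute.refl _).smul_right a).smul_right c

lemma ConvAlg.of_epsA : ConvAlg.of (epsA : H →ₗ[ℂ] LS) = 1 := by
  ext x
  simp [epsA, Algebra.algebraMap_eq_smul_one]

lemma epsA_conv (f : H →ₗ[ℂ] LS) : conv epsA f = f := by
  have h : ConvAlg.of (conv epsA f) = ConvAlg.of f := by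
    rw [ConvAlg.of_conv, ConvAlg.of_epsA, one_mul]
  exact congrArg ofConv h

lemma ConvAlg.of_convPow (Z : H →ₗ[ℂ] LS) (k : ℕ) :
    ConvAlg.of (convPow Z k) = ConvAlg.of Z ^ k := by
  induction k with
  | zero => exact ConvAlg.of_epsA
  | succ k ih => rw [pow_succ', ← ih]; rfl

lemma IsCharacter.charInv_mul {χ : H →ₗ[ℂ] LS} (hχ : IsCharacter χ) :
    ConvAlg.of (charInv χ) * ConvAlg.of χ = 1 := by
  ext1; ext1 x
  let 𝓡 := Coalgebra.Repr.arbitrary ℂ x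
  rw [𝓡.convMul_apply]
  calc ∑ i ∈ 𝓡.index, χ (HopfAlgebra.antipode ℂ (𝓡.left i)) * χ (𝓡.right i)
      = χ (∑ i ∈ 𝓡.index, HopfAlgebra.antipode ℂ (𝓡.left i) * 𝓡.right i) := by
        simp only [map_sum, hχ.2]
    _ = _ := by simp [HopfAlgebra.sum_antipode_mul_eq_smul 𝓡, hχ.1, Algebra.algebraMap_eq_smul_one]

lemma IsCharacter.mul_charInv {χ : H →ₗ[ℂ] LS} (hχ : IsCharacter χ) :
    ConvAlg.of χ * ConvAlg.of (charInv χ) = 1 := by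
  ext1; ext1 x
  let 𝓡 := Coalgebra.Repr.arbitrary ℂ x
  rw [𝓡.convMul_apply]
  calc ∑ i ∈ 𝓡.index, χ (𝓡.left i) * χ (HopfAlgebra.antipode ℂ (𝓡.right i))
      = χ (∑ i ∈ 𝓡.index, 𝓡.left i * HopfAlgebra.antipode ℂ (𝓡.right i)) := by
        simp only [map_sum, hχ.2]
    _ = _ := by simp [HopfAlgebra.sum_mul_antipode_eq_smul 𝓡, hχ.1, Algebra.algebraMap_eq_smul_one]

lemma Adc_eq_self_of_commute {g L : H →ₗ[ℂ] LS} (hg : IsCharacter g)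
    (h : Commute (ConvAlg.of g) (ConvAlg.of L)) : Adc g L = L := by
  have e : ConvAlg.of g * (ConvAlg.of L * ConvAlg.of (charInv g)) = ConvAlg.of L := by
    rw [← mul_assoc, h.eq, mul_assoc, hg.mul_charInv, mul_one]
  exact congrArg ofConv e

end Characters

section Exponential

variable {H : Type} [Ring H] [HopfAlgebra ℂ H]

def expPartialSum (Z : ConvAlg H) (M : ℕ) : ConvAlg H :=
  ∑ k ∈ Finset.range M, ((k.factorial : ℂ))⁻¹ • Z ^ k

lemma IsConvExp.eventually_eq {Z E : H →ₗ[ℂ] LS} (h : IsConvExp Z E) (x : H) :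
    ∀ᶠ M in atTop, ConvAlg.of E x = expPartialSum (ConvAlg.of Z) M x := by
  obtain ⟨N, hN⟩ := h x
  filter_upwards [eventually_ge_atTop N] with M hM
  simp [hN M hM, expPartialSum, ← ConvAlg.of_convPow]

lemma IsConvExp.mem_convMapsInto {S : Subalgebra ℂ LS} {Z E : H →ₗ[ℂ] LS}
    (hZ : ConvAlg.of Z ∈ S.convMapsInto) (h : IsConvExp Z E) :
    ConvAlg.of E ∈ S.convMapsInto := fun x => by
  obtain ⟨M, hM⟩ := (h.eventually_eq x).exists
  rw [hM]
  exact Subalgebra.sum_mem _ (fun k _ => Subalgebra.smul_mem _ (pow_mem hZ k) _) x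

lemma IsConvExp.commute {B Z E : H →ₗ[ℂ] LS} (hB : Commute (ConvAlg.of B) (ConvAlg.of Z))
    (h : IsConvExp Z E) : Commute (ConvAlg.of B) (ConvAlg.of E) := by
  have hP (M : ℕ) : Commute (ConvAlg.of B) (expPartialSum (ConvAlg.of Z) M) :=
    Commute.sum_right _ _ _ fun k _ => (hB.pow_right k).smul_right _
  ext1; ext1 x
  obtain ⟨M, hl, hr⟩ := (eventually_convMul_apply_eq h.eventually_eq (ConvAlg.of B) x).exists
  exact hl.trans ((congrArg (· x) (hP M).eq).trans hr.symm)

end Exponential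

section Birkhoff

variable {H : Type} [Ring H] [HopfAlgebra ℂ H]

lemma charInv_mem_convMapsInto {S : Subalgebra ℂ LS} {f : H →ₗ[ℂ] LS}
    (hf : ConvAlg.of f ∈ S.convMapsInto) : ConvAlg.of (charInv f) ∈ S.convMapsInto :=
  fun _ => hf _

lemma charInv_eq_epsA_of_conv_mem {gm gp : H →ₗ[ℂ] LS} (hgp : IsCharacter gp)
    (hp : ConvAlg.of gp ∈ aplusSubalgebra.convMapsInto) (hm : ∀ x, Aminus (gm x - epsA x))
    (h : ConvAlg.of (conv (charInv gm) gp) ∈ aplusSubalgebra.convMapsInto) :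
    charInv gm = epsA := by
  have hinv : ConvAlg.of (charInv gm) ∈ aplusSubalgebra.convMapsInto := by
    have e : ConvAlg.of (charInv gm) =
        ConvAlg.of (conv (charInv gm) gp) * ConvAlg.of (charInv gp) := by
      rw [ConvAlg.of_conv, mul_assoc, hgp.mul_charInv, mul_one]
    rw [e]
    exact mul_mem h (charInv_mem_convMapsInto hp)
  have hε : ConvAlg.of (epsA : H →ₗ[ℂ] LS) ∈ aplusSubalgebra.convMapsInto := by
    rw [ConvAlg.of_epsA]
    exact one_mem _
  ext1 x
  refine eq_of_aplus_of_aminus_sub (hinv x) (hε x) ?_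
  simpa [charInv, epsA] using hm (HopfAlgebra.antipode ℂ x)

end Birkhoff

section Locality

variable {H : Type} [Ring H] [HopfAlgebra ℂ H] {𝒜 : ℕ → Submodule ℂ H} [GradedAlgebra 𝒜]
  {φ : H →ₗ[ℂ] LS}

lemma IsLocal.charInv_conv_charScale_mem (hφ : IsLocal 𝒜 φ) (t : ℂ) :
    ConvAlg.of (conv (charInv φ) (charScale 𝒜 t φ)) ∈ aplusSubalgebra.convMapsInto := by
  obtain ⟨hφchar, φm, hφm⟩ := hφ
  obtain ⟨φp₀, -, hφp₀, hφp₀plus, -, hfac₀⟩ := hφm 0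
  obtain ⟨φp, -, -, hφpplus, -, hfac⟩ := hφm t
  rw [charScale_zero] at hfac₀
  have hinv : ConvAlg.of (charInv φ) = ConvAlg.of (charInv φp₀) * ConvAlg.of φm := by
    calc ConvAlg.of (charInv φ)
        = ConvAlg.of (charInv φp₀) * ConvAlg.of φp₀ * ConvAlg.of (charInv φ) := by
          rw [hφp₀.charInv_mul, one_mul]
      _ = ConvAlg.of (charInv φp₀) * ConvAlg.of φm * (ConvAlg.of φ * ConvAlg.of (charInv φ)) := by
          rw [← hfac₀, ConvAlg.of_conv, mul_assoc, mul_assoc, mul_assoc]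
      _ = ConvAlg.of (charInv φp₀) * ConvAlg.of φm := by rw [hφchar.mul_charInv, mul_one]
  rw [ConvAlg.of_conv, hinv, mul_assoc, ← ConvAlg.of_conv φm, hfac]
  exact mul_mem (charInv_mem_convMapsInto hφp₀plus) hφpplus

lemma IsLocal.tildeBeta_mem (hφ : IsLocal 𝒜 φ) {B : H →ₗ[ℂ] LS} (hB : HasTildeBeta 𝒜 φ B) :
    ConvAlg.of B ∈ aplusSubalgebra.convMapsInto := by
  intro x n hn
  have hzero : (fun t => (conv (charInv φ) (charScale 𝒜 t φ) x).coeff n) = fun _ => 0 :=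
    funext fun t => hφ.charInv_conv_charScale_mem t x n hn
  have hderiv := hB x n
  rw [hzero] at hderiv
  exact hderiv.unique (hasDerivAt_const 0 0)

end Locality

theorem tildeBeta_fixed_point_general
    {H : Type} [Ring H] [HopfAlgebra ℂ H]
    (𝒜 : ℕ → Submodule ℂ H) [GradedAlgebra 𝒜]
    (m n : ℤ) (hmn : 0 ≤ -n + 2 * m)
    (φ B : H →ₗ[ℂ] LS) (hloc : IsLocal 𝒜 φ) (hB : HasTildeBeta 𝒜 φ B)
    (gm gp : ℝ → (H →ₗ[ℂ] LS))
    (hgpchar : ∀ s, IsCharacter (gp s))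
    (hgpplus : ∀ s x, Aplus (gp s x))
    (hgmminus : ∀ s x, Aminus (gm s x - epsA x))
    (hfact : ∀ s : ℝ,
      IsConvExp ((-(2 * (s : ℂ))) • (lamZ (-n + 2 * m) • B))
        (conv (charInv (gm s)) (gp s))) :
    ∀ s : ℝ, Adc (gp s) B = B := by
  intro s
  have hZ : ConvAlg.of ((-(2 * (s : ℂ))) • (lamZ (-n + 2 * m) • B)) ∈
      aplusSubalgebra.convMapsInto := fun x =>
    Subalgebra.smul_mem _ (mul_mem (aplus_lamZ hmn) (hloc.tildeBeta_mem hB x)) _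
  have hgm : charInv (gm s) = epsA := charInv_eq_epsA_of_conv_mem (hgpchar s) (hgpplus s)
    (hgmminus s) ((hfact s).mem_convMapsInto hZ)
  have hexp := hfact s
  rw [hgm, epsA_conv] at hexp
  exact Adc_eq_self_of_commute (hgpchar s) (hexp.commute (ConvAlg.commute_smul_smul _ _ B)).symm

/-- **Theorem.** Let `φ` be a local character of a graded connected Hopf
algebra, with beta character `tildeβ_φ = B`, and let `−n+2m ≥ 0`.  If `g_±(s)`
are pointwise differentiable curves with `g_±(0) = ε` furnishing the Birkhoff
factorization `exp(−2sλ^{−n+2m}·tildeβ_φ) = g₋(s)⁻¹ ⋆ g₊(s)`, then the Lax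
pair flow `L(s) = Ad(g₊(s))(tildeβ_φ)` is constant: `L(s) = tildeβ_φ` for all
`s`.  In particular the beta character, hence the `β`-function, is a fixed
point of this Lax pair flow. -/
theorem tildeBeta_fixed_point
    {H : Type} [Ring H] [HopfAlgebra ℂ H]
    (𝒜 : ℕ → Submodule ℂ H) [GradedAlgebra 𝒜]
    (hconn : IsConnectedGrading 𝒜) (hΔ : ComulGraded 𝒜)
    (hcounit : CounitGraded 𝒜) (hS : AntipodeGraded 𝒜)
    (m n : ℤ) (hmn : 0 ≤ -n + 2 * m)
    (φ B : H →ₗ[ℂ] LS) (hloc : IsLocal 𝒜 φ) (hB : HasTildeBeta 𝒜 φ B)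
    (gm gp : ℝ → (H →ₗ[ℂ] LS))
    (hgmchar : ∀ s, IsCharacter (gm s)) (hgpchar : ∀ s, IsCharacter (gp s))
    (hgm0 : gm 0 = epsA) (hgp0 : gp 0 = epsA)
    (hgpplus : ∀ s x, Aplus (gp s x))
    (hgmminus : ∀ s x, Aminus (gm s x - epsA x))
    (hdm : PointwiseDifferentiable gm) (hdp : PointwiseDifferentiable gp)
    (hfact : ∀ s : ℝ,
      IsConvExp ((-(2 * (s : ℂ))) • (lamZ (-n + 2 * m) • B))
        (conv (charInv (gm s)) (gp s))) :
    ∀ s : ℝ, Adc (gp s) B = B :=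
  tildeBeta_fixed_point_general 𝒜 m n hmn φ B hloc hB gm gp hgpchar hgpplus hgmminus hfact
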